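/- arXiv:0906.2930 — 6 statements merged into one kernel-verified Lean document; each statement's English description precedes it below -/
import Mathlib

section
/- Let α, β, γ ∈ ℂ with β ≠ 0, and let θ be the ℂ-algebra automorphism of the polynomial ring ℂ[x,y] determined by θ(x) = y and θ(y) = αy + βx + γ. Then θ has finite order if and only if the roots of the polynomial X² − αX − β are distinct roots of unity and, in case γ ≠ 0, both roots are different from 1. -/
open MvPolynomial Finset

/-- `r` is a root of unity. -/
def IsRootOfUnity (r : ℂ) : Prop := ∃ m : ℕ, 0 < m ∧ r ^ m = 1

/-- The linear recurrence `s (n+2) = a * s (n+1) + b * s n`. -/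
private def seq2 (a b s0 s1 : ℂ) : ℕ → ℂ
  | 0 => s0
  | 1 => s1
  | n + 2 => a * seq2 a b s0 s1 (n + 1) + b * seq2 a b s0 s1 n

private lemma seq2_add_two (a b s0 s1 : ℂ) (n : ℕ) :
    seq2 a b s0 s1 (n + 2) = a * seq2 a b s0 s1 (n + 1) + b * seq2 a b s0 s1 n := rfl

private lemma seq2_B_closed (r₁ r₂ : ℂ) (n : ℕ) :
    (r₁ - r₂) * seq2 (r₁ + r₂) (-(r₁ * r₂)) 0 1 n = r₁ ^ n - r₂ ^ n := by
  induction n using Nat.twoStepInduction with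
  | zero => simp [seq2]
  | one => simp [seq2]
  | more n ih0 ih1 =>
    rw [seq2_add_two]
    linear_combination (r₁ + r₂) * ih1 - (r₁ * r₂) * ih0

private lemma seq2_A_closed (r₁ r₂ : ℂ) (n : ℕ) :
    (r₁ - r₂) * seq2 (r₁ + r₂) (-(r₁ * r₂)) 1 0 n = r₁ * r₂ ^ n - r₂ * r₁ ^ n := by
  induction n using Nat.twoStepInduction with
  | zero => simp [seq2]
  | one => simp [seq2]; ring
  | more n ih0 ih1 =>
    rw [seq2_add_two]
    linear_combination (r₁ + r₂) * ih1 - (r₁ * r₂) * ih0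

private lemma seq2_double (r : ℂ) (n : ℕ) :
    r * seq2 (r + r) (-(r * r)) 0 1 n = n * r ^ n := by
  induction n using Nat.twoStepInduction with
  | zero => simp [seq2]
  | one => simp [seq2]
  | more n ih0 ih1 =>
    rw [seq2_add_two]
    push_cast at ih0 ih1 ⊢
    linear_combination (r + r) * ih1 - (r * r) * ih0

private lemma sum_seq2_rec (a b : ℂ) (n : ℕ) :
    ∑ k ∈ range (n + 2), seq2 a b 0 1 k =
      a * ∑ k ∈ range (n + 1), seq2 a b 0 1 k + b * ∑ k ∈ range n, seq2 a b 0 1 k + 1 := by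
  induction n with
  | zero => simp [sum_range_succ, seq2]
  | succ n ih =>
    simp only [sum_range_succ] at ih ⊢
    rw [seq2_add_two]
    linear_combination ih

private lemma coeffs_eq {a b c a' b' c' : ℂ}
    (h : (C a * X 0 + C b * X 1 + C c : MvPolynomial (Fin 2) ℂ) =
      C a' * X 0 + C b' * X 1 + C c') :
    a = a' ∧ b = b' ∧ c = c' := by
  have h0 := congrArg (eval (![0, 0] : Fin 2 → ℂ)) h
  have h1 := congrArg (eval (![1, 0] : Fin 2 → ℂ)) h
  have h2 := congrArg (eval (![0, 1] : Fin 2 → ℂ)) h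
  simp [eval_X, eval_C] at h0 h1 h2
  exact ⟨by linear_combination h1 - h0, by linear_combination h2 - h0, h0⟩

/-- Let `β ≠ 0` and let `θ` be the `ℂ`-algebra automorphism of `ℂ[x,y]` with
`θ(x) = y` and `θ(y) = αy + βx + γ`.  Then `θ` has finite order if and only if the
roots `r₁, r₂` of `X² − αX − β` are distinct roots of unity and, when `γ ≠ 0`,
both roots are different from `1`. -/
theorem theta_finite_order_iff (α β γ : ℂ) (hβ : β ≠ 0)
    (θ : MvPolynomial (Fin 2) ℂ ≃ₐ[ℂ] MvPolynomial (Fin 2) ℂ)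
    (hθx : θ (X 0) = X 1)
    (hθy : θ (X 1) = C α * X 1 + C β * X 0 + C γ) :
    IsOfFinOrder θ ↔
      ∃ r₁ r₂ : ℂ, r₁ + r₂ = α ∧ r₁ * r₂ = -β ∧ r₁ ≠ r₂ ∧
        IsRootOfUnity r₁ ∧ IsRootOfUnity r₂ ∧ (γ ≠ 0 → r₁ ≠ 1 ∧ r₂ ≠ 1) := by
  set A : ℕ → ℂ := seq2 α β 1 0 with hAdef
  set B : ℕ → ℂ := seq2 α β 0 1 with hBdef
  set Cc : ℕ → ℂ := fun n => γ * ∑ k ∈ range n, B k with hCcdef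
  have hCc2 : ∀ n, Cc (n + 2) = α * Cc (n + 1) + β * Cc n + γ := by
    intro n
    have h := sum_seq2_rec α β n
    simp only [hCcdef, hBdef]
    linear_combination γ * h
  have hCθ : ∀ (a : ℂ) (k : ℕ), (θ ^ k) (C a) = C a := by
    intro a k
    have := (θ ^ k).commutes a
    simpa [MvPolynomial.algebraMap_eq] using this
  have key : ∀ n : ℕ,
      (θ ^ n) (X 0) = C (A n) * X 0 + C (B n) * X 1 + C (Cc n) ∧
      (θ ^ n) (X 1) = C (A (n + 1)) * X 0 + C (B (n + 1)) * X 1 + C (Cc (n + 1)) := by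
    intro n
    induction n with
    | zero =>
      constructor
      · simp [hAdef, hBdef, hCcdef, seq2]
      · simp [hAdef, hBdef, hCcdef, seq2]
    | succ n ih =>
      have hsucc : ∀ p, (θ ^ (n + 1)) p = (θ ^ n) (θ p) := by
        intro p; rw [pow_succ]; rfl
      constructor
      · rw [hsucc, hθx]; exact ih.2
      · rw [hsucc, hθy, map_add, map_add, map_mul, map_mul, hCθ, hCθ, hCθ, ih.1, ih.2]
        have hA2 : A (n + 2) = α * A (n + 1) + β * A n := rfl
        have hB2 : B (n + 2) = α * B (n + 1) + β * B n := rfl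
        rw [hA2, hB2, hCc2 n]
        simp only [C_add, C_mul]
        ring
  rw [isOfFinOrder_iff_pow_eq_one]
  constructor
  · rintro ⟨n, hn, hpow⟩
    have k1 := (key n).1
    have k2 := (key n).2
    rw [hpow] at k1 k2
    simp only [AlgEquiv.one_apply] at k1 k2
    have hx0 : (X 0 : MvPolynomial (Fin 2) ℂ) = C 1 * X 0 + C 0 * X 1 + C 0 := by simp
    have hx1 : (X 1 : MvPolynomial (Fin 2) ℂ) = C 0 * X 0 + C 1 * X 1 + C 0 := by simp
    obtain ⟨eA, eB, eC⟩ := coeffs_eq (hx0 ▸ k1 : (C 1 * X 0 + C 0 * X 1 + C 0 : MvPolynomial (Fin 2) ℂ) = C (A n) * X 0 + C (B n) * X 1 + C (Cc n))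
    obtain ⟨eA', eB', eC'⟩ := coeffs_eq (hx1 ▸ k2 : (C 0 * X 0 + C 1 * X 1 + C 0 : MvPolynomial (Fin 2) ℂ) = C (A (n+1)) * X 0 + C (B (n+1)) * X 1 + C (Cc (n+1)))
    -- construct the roots
    obtain ⟨s, hs⟩ := IsAlgClosed.exists_pow_nat_eq (α ^ 2 + 4 * β) (n := 2) (by norm_num)
    obtain ⟨r₁, r₂, h1, h2⟩ : ∃ r₁ r₂ : ℂ, r₁ + r₂ = α ∧ r₁ * r₂ = -β :=
      ⟨(α + s) / 2, (α - s) / 2, by ring, by linear_combination (-(1:ℂ)/4) * hs⟩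
    have hα : α = r₁ + r₂ := h1.symm
    have hβ' : β = -(r₁ * r₂) := by linear_combination h2
    have hncast : (n : ℂ) ≠ 0 := Nat.cast_ne_zero.mpr hn.ne'
    by_cases hrr : r₁ = r₂
    · exfalso
      have hdouble : r₁ * B n = n * r₁ ^ n := by
        rw [hBdef, hα, hβ', hrr]
        exact seq2_double r₂ n
      rw [← eB, mul_zero] at hdouble
      have hr₁ : r₁ ≠ 0 := by
        intro h
        apply hβ
        rw [hβ', h, zero_mul, neg_zero]
      exact (mul_ne_zero hncast (pow_ne_zero n hr₁)) hdouble.symm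
    · have hsub : r₁ - r₂ ≠ 0 := sub_ne_zero.mpr hrr
      have hB : ∀ m, (r₁ - r₂) * B m = r₁ ^ m - r₂ ^ m := by
        intro m; rw [hBdef, hα, hβ']; exact seq2_B_closed r₁ r₂ m
      have hA : ∀ m, (r₁ - r₂) * A m = r₁ * r₂ ^ m - r₂ * r₁ ^ m := by
        intro m; rw [hAdef, hα, hβ']; exact seq2_A_closed r₁ r₂ m
      have hBn := hB n
      rw [← eB, mul_zero] at hBn
      have hrn : r₁ ^ n = r₂ ^ n := by linear_combination -hBn
      have hAn := hA n
      rw [← eA, mul_one] at hAn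
      have hr1n : r₁ ^ n = 1 := by
        have h : (r₁ - r₂) * (r₁ ^ n - 1) = 0 := by linear_combination -hAn + r₁ * hrn
        have := mul_eq_zero.mp h
        rcases this with h' | h'
        · exact absurd h' hsub
        · linear_combination h'
      have hr2n : r₂ ^ n = 1 := by rw [← hrn]; exact hr1n
      refine ⟨r₁, r₂, h1, h2, hrr, ⟨n, hn, hr1n⟩, ⟨n, hn, hr2n⟩, ?_⟩
      intro hγ
      have hS : ∑ k ∈ range n, B k = 0 := by
        have := eC.symm
        rw [hCcdef] at this
        simp only at this
        rcases mul_eq_zero.mp this with h' | h'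
        · exact absurd h' hγ
        · exact h'
      have hGG : ∑ k ∈ range n, r₁ ^ k = ∑ k ∈ range n, r₂ ^ k := by
        have h : (r₁ - r₂) * ∑ k ∈ range n, B k =
            (∑ k ∈ range n, r₁ ^ k) - ∑ k ∈ range n, r₂ ^ k := by
          rw [mul_sum, ← sum_sub_distrib]
          exact sum_congr rfl fun k _ => hB k
        rw [hS, mul_zero] at h
        linear_combination -h
      constructor
      · intro h
        have hG1 : ∑ k ∈ range n, r₁ ^ k = (n : ℂ) := by simp [h]
        have hr2 : r₂ ≠ 1 := fun hh => hrr (h.trans hh.symm)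
        have hG2 : ∑ k ∈ range n, r₂ ^ k = 0 := by
          have hg := geom_sum_mul r₂ n
          rw [hr2n, sub_self] at hg
          rcases mul_eq_zero.mp hg with h' | h'
          · exact h'
          · exact absurd (by linear_combination h') hr2
        rw [hG1, hG2] at hGG
        exact hncast hGG
      · intro h
        have hG2 : ∑ k ∈ range n, r₂ ^ k = (n : ℂ) := by simp [h]
        have hr1 : r₁ ≠ 1 := fun hh => hrr (hh.trans h.symm)
        have hG1 : ∑ k ∈ range n, r₁ ^ k = 0 := by
          have hg := geom_sum_mul r₁ n
          rw [hr1n, sub_self] at hg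
          rcases mul_eq_zero.mp hg with h' | h'
          · exact h'
          · exact absurd (by linear_combination h') hr1
        rw [hG1, hG2] at hGG
        exact hncast hGG.symm
  · rintro ⟨r₁, r₂, h1, h2, hne, ⟨m₁, hm₁, hr₁⟩, ⟨m₂, hm₂, hr₂⟩, hγcond⟩
    have hα : α = r₁ + r₂ := h1.symm
    have hβ' : β = -(r₁ * r₂) := by linear_combination h2
    have hsub : r₁ - r₂ ≠ 0 := sub_ne_zero.mpr hne
    set n := m₁ * m₂ with hndef
    have hn : 0 < n := Nat.mul_pos hm₁ hm₂
    have hr1n : r₁ ^ n = 1 := by rw [hndef, pow_mul, hr₁, one_pow]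
    have hr2n : r₂ ^ n = 1 := by rw [hndef, mul_comm, pow_mul, hr₂, one_pow]
    have hB : ∀ m, (r₁ - r₂) * B m = r₁ ^ m - r₂ ^ m := by
      intro m; rw [hBdef, hα, hβ']; exact seq2_B_closed r₁ r₂ m
    have hA : ∀ m, (r₁ - r₂) * A m = r₁ * r₂ ^ m - r₂ * r₁ ^ m := by
      intro m; rw [hAdef, hα, hβ']; exact seq2_A_closed r₁ r₂ m
    have eB : B n = 0 := by
      have h := hB n
      rw [hr1n, hr2n, sub_self] at h
      exact (mul_eq_zero.mp h).resolve_left hsub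
    have eA : A n = 1 := by
      apply mul_left_cancel₀ hsub
      rw [hA n, hr1n, hr2n]; ring
    have eA' : A (n + 1) = 0 := by
      apply mul_left_cancel₀ hsub
      rw [hA (n + 1), pow_succ, pow_succ, hr1n, hr2n]; ring
    have eB' : B (n + 1) = 1 := by
      apply mul_left_cancel₀ hsub
      rw [hB (n + 1), pow_succ, pow_succ, hr1n, hr2n]; ring
    have eS : γ * ∑ k ∈ range n, B k = 0 := by
      by_cases hγ : γ = 0
      · rw [hγ, zero_mul]
      · obtain ⟨hne1, hne2⟩ := hγcond hγ
        have hG1 : ∑ k ∈ range n, r₁ ^ k = 0 := by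
          have hg := geom_sum_mul r₁ n
          rw [hr1n, sub_self] at hg
          rcases mul_eq_zero.mp hg with h' | h'
          · exact h'
          · exact absurd (by linear_combination h') hne1
        have hG2 : ∑ k ∈ range n, r₂ ^ k = 0 := by
          have hg := geom_sum_mul r₂ n
          rw [hr2n, sub_self] at hg
          rcases mul_eq_zero.mp hg with h' | h'
          · exact h'
          · exact absurd (by linear_combination h') hne2
        have hS : ∑ k ∈ range n, B k = 0 := by
          apply mul_left_cancel₀ hsub
          rw [mul_zero, mul_sum]
          have h : ∀ k ∈ range n, (r₁ - r₂) * B k = r₁ ^ k - r₂ ^ k :=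
            fun k _ => hB k
          rw [sum_congr rfl h, sum_sub_distrib, hG1, hG2, sub_zero]
        rw [hS, mul_zero]
    have eC : Cc n = 0 := eS
    have eC' : Cc (n + 1) = 0 := by
      rw [hCcdef]
      simp only [sum_range_succ]
      have hS' : γ * (∑ k ∈ range n, B k) + γ * B n = 0 := by
        rw [eB, mul_zero, add_zero]; exact eS
      linear_combination hS'
    refine ⟨n, hn, ?_⟩
    have hx0 : (θ ^ n) (X 0) = X 0 := by
      rw [(key n).1, eA, eB, eC]; simp
    have hx1 : (θ ^ n) (X 1) = X 1 := by
      rw [(key n).2, eA', eB', eC']; simp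
    have h' : ((θ ^ n : MvPolynomial (Fin 2) ℂ ≃ₐ[ℂ] MvPolynomial (Fin 2) ℂ) :
        MvPolynomial (Fin 2) ℂ →ₐ[ℂ] MvPolynomial (Fin 2) ℂ) = AlgHom.id ℂ _ := by
      apply MvPolynomial.algHom_ext
      intro i
      fin_cases i
      · simpa using hx0
      · simpa using hx1
    exact AlgEquiv.ext fun p => by simpa using DFunLike.congr_fun h' p
end

section
/- Let A be a ring, let M be a Noetherian uniform right A-module, and let x be a central element of A such that Nx = 0 for some nonzero submodule N of M. Then there exists n ≥ 1 with Mxⁿ = 0. -/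
open MulOpposite

/-- A module is uniform if any two nonzero submodules intersect nontrivially. -/
def IsUniformMod (R : Type*) [Ring R] (M : Type*) [AddCommGroup M] [Module R M] : Prop :=
  ∀ N L : Submodule R M, N ≠ ⊥ → L ≠ ⊥ → N ⊓ L ≠ ⊥

/-! Multiplication by the central element `x` is an endomorphism `f` of `M` whose kernel contains
`N ≠ 0`. Since `M` is Noetherian, `ker fⁿ` and `range fⁿ` are disjoint for large `n`; as
`ker fⁿ ⊇ N` is nonzero and `M` is uniform, this forces `range fⁿ = 0`. -/

theorem IsUniformMod.eq_bot_of_disjoint {R M : Type*} [Ring R] [AddCommGroup M] [Module R M]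
    (hM : IsUniformMod R M) {K L : Submodule R M} (hK : K ≠ ⊥) (hKL : Disjoint K L) :
    L = ⊥ := by
  by_contra hL
  exact hM K L hK hL hKL.eq_bot

theorem IsUniformMod.isNilpotent_of_ker_ne_bot {R M : Type*} [Ring R] [AddCommGroup M]
    [Module R M] [IsNoetherian R M] (hM : IsUniformMod R M) {f : Module.End R M}
    (hf : LinearMap.ker f ≠ ⊥) : IsNilpotent f := by
  obtain ⟨n, hn⟩ :=
    (f.eventually_disjoint_ker_pow_range_pow.and (Filter.eventually_ge_atTop 1)).exists
  have hker : LinearMap.ker (f ^ n) ≠ ⊥ :=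
    ne_bot_of_le_ne_bot hf (by simpa using f.iterateKer.monotone hn.2)
  exact ⟨n, LinearMap.range_eq_bot.mp (hM.eq_bot_of_disjoint hker hn.1)⟩

theorem Module.End.smulLeft_pow_apply {R M : Type*} [Ring R] [AddCommGroup M] [Module R M]
    (r : R) (hr : r ∈ Set.center R) (n : ℕ) (m : M) : (smulLeft r hr ^ n) m = r ^ n • m := by
  rw [Module.End.pow_apply]
  exact smul_iterate_apply r n m

/-- Let `M` be a Noetherian uniform right `A`-module and `x` a central element of `A`
killing some nonzero submodule `N` of `M`.  Then `M·xⁿ = 0` for some `n ≥ 1`.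
(Right `A`-modules are left `Aᵐᵒᵖ`-modules; `m·x` is `op x • m`.) -/
theorem pow_annihilates_of_uniform (A : Type*) [Ring A] (M : Type*) [AddCommGroup M]
    [Module Aᵐᵒᵖ M] (hNoeth : IsNoetherian Aᵐᵒᵖ M) (hUnif : IsUniformMod Aᵐᵒᵖ M)
    (x : A) (hx : ∀ a : A, a * x = x * a)
    (N : Submodule Aᵐᵒᵖ M) (hN : N ≠ ⊥) (hNx : ∀ m ∈ N, op x • m = 0) :
    ∃ n : ℕ, 1 ≤ n ∧ ∀ m : M, op (x ^ n) • m = 0 := by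
  have hcenter : op x ∈ Set.center Aᵐᵒᵖ :=
    Semigroup.mem_center_iff.mpr fun a => congrArg op (hx (unop a)).symm
  set f := Module.End.smulLeft (M := M) (op x) hcenter
  have hker : LinearMap.ker f ≠ ⊥ := ne_bot_of_le_ne_bot hN hNx
  obtain ⟨n, hn⟩ := hUnif.isNilpotent_of_ker_ne_bot hker
  refine ⟨n + 1, n.succ_pos, fun m => ?_⟩
  rw [op_pow, ← Module.End.smulLeft_pow_apply _ hcenter, pow_eq_zero_of_le n.le_succ hn,
    LinearMap.zero_apply]
end

section
/- Let A be a ring such that for every essential right ideal I of A the right A-module A/I is Artinian. Then every finitely generated essential extension of a simple right A-module is Artinian. In particular, every semiprime Noetherian ring of Krull dimension one satisfies property (⋄). -/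
universe u

/-- A submodule is essential if it intersects every nonzero submodule nontrivially. -/
def IsEssSub {R M : Type*} [Ring R] [AddCommGroup M] [Module R M] (N : Submodule R M) : Prop :=
  ∀ L : Submodule R M, L ≠ ⊥ → N ⊓ L ≠ ⊥

/-- Property `(⋄)`: every finitely generated essential extension of a simple right
`A`-module is Artinian.  Right `A`-modules are (left) `Aᵐᵒᵖ`-modules. -/
def HasDiamond (A : Type*) [Ring A] : Prop :=
  ∀ (M : Type u) (_ : AddCommGroup M) (_ : Module Aᵐᵒᵖ M) (_ : Module.Finite Aᵐᵒᵖ M)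
    (N : Submodule Aᵐᵒᵖ M), IsSimpleModule Aᵐᵒᵖ N → IsEssSub N → IsArtinian Aᵐᵒᵖ M

/-!
Since `N` is simple it is Artinian, so it suffices that `M ⧸ N` is Artinian. This module is
generated by finitely many cyclic submodules `(m + N) A`, and `(m + N) A ≅ A ⧸ I` with
`I = {a | m a ∈ N}`. Pulling back the essential submodule `N` along `a ↦ m a` shows that `I` is
an essential right ideal, so each `(m + N) A` is Artinian by hypothesis, and hence so is their sum.
-/

section Essential

variable {R P M : Type*} [Ring R] [AddCommGroup P] [Module R P] [AddCommGroup M] [Module R M]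

theorem IsEssSub.comap {N : Submodule R M} (hN : IsEssSub N) (f : P →ₗ[R] M) :
    IsEssSub (N.comap f) := by
  intro L hL
  by_cases hfL : L.map f = ⊥
  · have hLN : L ≤ N.comap f := Submodule.map_le_iff_le_comap.mp (hfL.le.trans bot_le)
    rwa [inf_eq_right.mpr hLN]
  · obtain ⟨y, hy, hy0⟩ := Submodule.exists_mem_ne_zero_of_ne_bot (hN _ hfL)
    obtain ⟨hyN, a, haL, rfl⟩ : y ∈ N ∧ ∃ a ∈ L, f a = y := by
      simpa [Submodule.mem_inf, Submodule.mem_map] using hy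
    refine (Submodule.ne_bot_iff _).mpr ⟨a, ⟨hyN, haL⟩, ?_⟩
    rintro rfl
    exact hy0 (map_zero f)

theorem isArtinian_range_mkQ_comp
    (hP : ∀ I : Submodule R P, IsEssSub I → IsArtinian R (P ⧸ I))
    {N : Submodule R M} (hN : IsEssSub N) (f : P →ₗ[R] M) :
    IsArtinian R (LinearMap.range (N.mkQ ∘ₗ f)) := by
  have hker : LinearMap.ker (N.mkQ ∘ₗ f) = N.comap f := by
    rw [LinearMap.ker_comp, Submodule.ker_mkQ]
  have := hP _ (hker ▸ hN.comap f)
  exact isArtinian_of_linearEquiv (N.mkQ ∘ₗ f).quotKerEquivRange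

end Essential

theorem isArtinian_of_forall_isArtinian_span_singleton {R M : Type*} [Ring R] [AddCommGroup M]
    [Module R M] [Module.Finite R M] (h : ∀ x : M, IsArtinian R (R ∙ x)) : IsArtinian R M := by
  obtain ⟨n, v, hv⟩ := Module.Finite.exists_fin (R := R) (M := M)
  have : IsArtinian R ↥(⨆ i, R ∙ v i) := isArtinian_iSup
  rw [← Submodule.span_range_eq_iSup, hv] at this
  exact isArtinian_of_linearEquiv Submodule.topEquiv

section RightModule

open MulOpposite

variable {A M : Type*} [Ring A] [AddCommGroup M] [Module Aᵐᵒᵖ M]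

variable (A) in
def toSpanSingletonOp (m : M) : A →ₗ[Aᵐᵒᵖ] M where
  toFun a := op a • m
  map_add' a b := by rw [op_add, add_smul]
  map_smul' r a := by
    rw [smul_eq_mul_unop, op_mul, op_unop, mul_smul, RingHom.id_apply]

theorem range_toSpanSingletonOp (m : M) :
    LinearMap.range (toSpanSingletonOp A m) = Aᵐᵒᵖ ∙ m := by
  refine le_antisymm ?_ ?_
  · rintro x ⟨a, rfl⟩
    exact Submodule.smul_mem _ _ (Submodule.mem_span_singleton_self m)
  · rw [Submodule.span_singleton_le_iff_mem]
    exact ⟨1, one_smul _ m⟩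

theorem isArtinian_quotient_of_isEssSub
    (h : ∀ I : Submodule Aᵐᵒᵖ A, IsEssSub I → IsArtinian Aᵐᵒᵖ (A ⧸ I))
    [Module.Finite Aᵐᵒᵖ M] {N : Submodule Aᵐᵒᵖ M} (hN : IsEssSub N) :
    IsArtinian Aᵐᵒᵖ (M ⧸ N) := by
  refine isArtinian_of_forall_isArtinian_span_singleton fun x ↦ ?_
  obtain ⟨m, rfl⟩ := N.mkQ_surjective x
  have hrange : LinearMap.range (N.mkQ ∘ₗ toSpanSingletonOp A m) = Aᵐᵒᵖ ∙ N.mkQ m := by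
    rw [LinearMap.range_comp, range_toSpanSingletonOp, Submodule.map_span, Set.image_singleton]
  exact hrange ▸ isArtinian_range_mkQ_comp h hN _

end RightModule

/-- If for every essential right ideal `I` of `A` the right `A`-module `A/I` is
Artinian, then every finitely generated essential extension of a simple right
`A`-module is Artinian, i.e. `A` has property `(⋄)`.  (In particular this applies to
every semiprime Noetherian ring of Krull dimension one, since there factoring by an
essential right ideal drops the Krull dimension.) -/
theorem hasDiamond_of_artinian_factors (A : Type u) [Ring A]
    (h : ∀ I : Submodule Aᵐᵒᵖ A, IsEssSub I → IsArtinian Aᵐᵒᵖ (A ⧸ I)) :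
    HasDiamond A := by
  intro M _ _ _ N _ hN
  exact (isArtinian_iff_submodule_quotient N).mpr
    ⟨inferInstance, isArtinian_quotient_of_isEssSub h hN⟩
end

section
/- Let A be a Noetherian ring. Suppose that every right primitive ideal P of A has the right Artin–Rees property (i.e. for every essential extension N ⊆ M of finitely generated right A-modules with NP = 0 there exists n ≥ 1 with MPⁿ = 0) and that A/P is a right Artinian ring for every right primitive ideal P. Then every finitely generated essential extension of a simple right A-module is Artinian. -/
universe u

/-- A right primitive ideal of `A` is the annihilator of a simple right `A`-module.
Right ideals of `A` are left ideals of `Aᵐᵒᵖ`. -/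
def IsRightPrimitive (A : Type u) [Ring A] (P : Ideal Aᵐᵒᵖ) : Prop :=
  ∃ (M : Type u) (_ : AddCommGroup M) (_ : Module Aᵐᵒᵖ M),
    IsSimpleModule Aᵐᵒᵖ M ∧ P = Module.annihilator Aᵐᵒᵖ M

/-- `P` has the right Artin–Rees property: for every essential extension `N ⊆ M` of
finitely generated right `A`-modules with `N·P = 0` there is `n ≥ 1` with `M·Pⁿ = 0`. -/
def HasRightARProperty (A : Type u) [Ring A] (P : Ideal Aᵐᵒᵖ) : Prop :=
  ∀ (M : Type u) (_ : AddCommGroup M) (_ : Module Aᵐᵒᵖ M) (_ : Module.Finite Aᵐᵒᵖ M)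
    (N : Submodule Aᵐᵒᵖ M) (_ : Module.Finite Aᵐᵒᵖ N),
    IsEssSub N → P • N = ⊥ → ∃ n : ℕ, 1 ≤ n ∧ P ^ n • (⊤ : Submodule Aᵐᵒᵖ M) = ⊥

/-
Let `P` be the annihilator of the simple essential submodule `N ⊆ M`. It is right primitive,
so the Artin–Rees property gives `M·Pⁿ = 0`. The filtration `M ⊇ MP ⊇ ⋯ ⊇ MPⁿ = 0` has
finitely generated factors (A is right noetherian) killed by `P`, and each such factor is a
quotient of a finite sum of copies of the right Artinian module `A/P`; hence `M` is Artinian.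
-/

open Submodule in
theorem isArtinian_of_le_annihilator {R M : Type*} [Ring R] [AddCommGroup M] [Module R M]
    [Module.Finite R M] {I : Ideal R} [IsArtinian R (R ⧸ I)]
    (hI : I ≤ Module.annihilator R M) : IsArtinian R M := by
  have hspan (x : M) : IsArtinian R (R ∙ x) := by
    rw [← LinearMap.range_toSpanSingleton, ← I.range_liftQ (LinearMap.toSpanSingleton R M x)
      fun r hr ↦ Module.mem_annihilator.mp (hI hr) x]
    infer_instance
  obtain ⟨s, hs⟩ := Module.Finite.fg_top (R := R) (M := M)
  rw [span_eq_iSup_of_singleton_spans, iSup_subtype'] at hs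
  have : IsArtinian R (⊤ : Submodule R M) := hs ▸ inferInstance
  exact isArtinian_of_linearEquiv Submodule.topEquiv

theorem isArtinian_of_pow_le_annihilator {R : Type*} [Ring R] [IsNoetherianRing R]
    {I : Ideal R} [IsArtinian R (R ⧸ I)] (n : ℕ) (M : Type*) [AddCommGroup M] [Module R M]
    [Module.Finite R M] (hn : I ^ n ≤ Module.annihilator R M) : IsArtinian R M := by
  induction n generalizing M with
  | zero =>
    rw [Submodule.pow_zero, Ideal.one_eq_top] at hn
    exact isArtinian_of_le_annihilator (I := I) (le_top.trans hn)
  | succ n ih =>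
    let N : Submodule R M := I • ⊤
    have : IsArtinian R N := ih N <| by
      rwa [← Submodule.annihilator_top, Submodule.le_annihilator_iff, Submodule.pow_succ,
        Submodule.mul_smul, ← Submodule.le_annihilator_iff] at hn
    have : IsArtinian R (M ⧸ N) := isArtinian_of_le_annihilator (I := I) <| by
      rw [← SetLike.coe_subset_coe, ← Module.isTorsionBySet_iff_subset_annihilator]
      exact Module.isTorsionBySet_quotient_ideal_smul M I
    exact (isArtinian_iff_submodule_quotient N).mpr ⟨‹_›, ‹_›⟩

theorem IsEssSub.map_linearEquiv {R M M' : Type*} [Ring R] [AddCommGroup M] [Module R M]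
    [AddCommGroup M'] [Module R M'] {N : Submodule R M} (h : IsEssSub N) (e : M ≃ₗ[R] M') :
    IsEssSub (N.map (e : M →ₗ[R] M')) := by
  let o := Submodule.orderIsoMapComap e
  intro L hL
  rw [← o.apply_symm_apply L, ← Submodule.orderIsoMapComap_apply, ← o.map_inf, Ne,
    map_eq_bot_iff o]
  exact h _ ((map_eq_bot_iff o.symm).not.mpr hL)

theorem isArtinian_of_isEssSub {A : Type u} [Ring A] [IsNoetherianRing Aᵐᵒᵖ]
    (hAR : ∀ P : Ideal Aᵐᵒᵖ, IsRightPrimitive A P → HasRightARProperty A P)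
    (hart : ∀ P : Ideal Aᵐᵒᵖ, IsRightPrimitive A P → IsArtinian Aᵐᵒᵖ (Aᵐᵒᵖ ⧸ P))
    {M : Type u} [AddCommGroup M] [Module Aᵐᵒᵖ M] [Module.Finite Aᵐᵒᵖ M]
    (N : Submodule Aᵐᵒᵖ M) [IsSimpleModule Aᵐᵒᵖ N] (hess : IsEssSub N) :
    IsArtinian Aᵐᵒᵖ M := by
  let P := Module.annihilator Aᵐᵒᵖ N
  have hP : IsRightPrimitive A P := ⟨N, inferInstance, inferInstance, ‹_›, rfl⟩
  have := hart P hP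
  obtain ⟨n, -, hn⟩ :=
    hAR P hP M ‹_› ‹_› ‹_› N inferInstance hess (Submodule.le_annihilator_iff.mp le_rfl)
  exact isArtinian_of_pow_le_annihilator (I := P) n M <| by
    rwa [← Submodule.annihilator_top, Submodule.le_annihilator_iff]

theorem hasDiamond_of_ar_primitive_general (A : Type u) [Ring A]
    (hright : IsNoetherian Aᵐᵒᵖ A)
    (hAR : ∀ P : Ideal Aᵐᵒᵖ, IsRightPrimitive A P → HasRightARProperty A P)
    (hart : ∀ P : Ideal Aᵐᵒᵖ, IsRightPrimitive A P → IsArtinian Aᵐᵒᵖ (Aᵐᵒᵖ ⧸ P)) :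
    HasDiamond A := by
  have : IsNoetherianRing Aᵐᵒᵖ := isNoetherian_of_linearEquiv (MulOpposite.opLinearEquiv Aᵐᵒᵖ)
  intro M _ _ _ N hN hess
  -- primitivity and the Artin–Rees property only speak about modules in the universe of `A`
  have : Small.{u} M := Module.Finite.small Aᵐᵒᵖ M
  let e := Shrink.linearEquiv.{u} Aᵐᵒᵖ M
  let N' := N.map (e.symm : M →ₗ[Aᵐᵒᵖ] Shrink.{u} M)
  have : IsSimpleModule Aᵐᵒᵖ N' := IsSimpleModule.congr (e.symm.submoduleMap N).symm
  have : IsArtinian Aᵐᵒᵖ (Shrink.{u} M) :=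
    isArtinian_of_isEssSub hAR hart N' (hess.map_linearEquiv e.symm)
  exact isArtinian_of_linearEquiv e

/-- Let `A` be a Noetherian ring such that every right primitive ideal `P` has the
right Artin–Rees property and every right primitive factor `A/P` is right Artinian.
Then every finitely generated essential extension of a simple right `A`-module is
Artinian. -/
theorem hasDiamond_of_ar_primitive (A : Type u) [Ring A]
    (hleft : IsNoetherianRing A) (hright : IsNoetherian Aᵐᵒᵖ A)
    (hAR : ∀ P : Ideal Aᵐᵒᵖ, IsRightPrimitive A P → HasRightARProperty A P)
    (hart : ∀ P : Ideal Aᵐᵒᵖ, IsRightPrimitive A P → IsArtinian Aᵐᵒᵖ (Aᵐᵒᵖ ⧸ P)) :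
    HasDiamond A :=
  hasDiamond_of_ar_primitive_general A hright hAR hart
end

section
/- Let α, β, γ ∈ ℂ with β ≠ 0, and let θ be the ℂ-algebra automorphism of ℂ[x,y] determined by θ(x) = y and θ(y) = αy + βx + γ. If the polynomial X² − αX − β has a double root (equivalently, α² + 4β = 0), then θ has infinite order. -/
open MvPolynomial

/-- Let `β ≠ 0` and let `θ` be the `ℂ`-algebra automorphism of `ℂ[x,y]` with
`θ(x) = y` and `θ(y) = αy + βx + γ`.  If `X² − αX − β` has a double root
(equivalently `α² + 4β = 0`), then `θ` has infinite order. -/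
theorem theta_infinite_order_of_double_root (α β γ : ℂ) (hβ : β ≠ 0)
    (θ : MvPolynomial (Fin 2) ℂ ≃ₐ[ℂ] MvPolynomial (Fin 2) ℂ)
    (hθx : θ (X 0) = X 1)
    (hθy : θ (X 1) = C α * X 1 + C β * X 0 + C γ)
    (hdouble : α ^ 2 + 4 * β = 0) :
    ¬ IsOfFinOrder θ := by
  intro hfin
  obtain ⟨n, hn, hpow⟩ := isOfFinOrder_iff_pow_eq_one.mp hfin
  set l : ℂ := α / 2 with hl
  have hα : α = 2 * l := by rw [hl]; ring
  have hβ2 : β = -(l ^ 2) := by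
    rw [hl]
    field_simp
    linear_combination hdouble
  have hl0 : l ≠ 0 := by
    intro h
    apply hβ
    rw [hβ2, h]; ring
  set f : ℂ × ℂ → ℂ × ℂ := fun p => (p.2, α * p.2 + β * p.1 + γ) with hf
  have step1 : ∀ (a b : ℂ) (p : MvPolynomial (Fin 2) ℂ),
      aeval ![a, b] (θ p) = aeval ![b, α * b + β * a + γ] p := by
    intro a b p
    have h : ((aeval ![a, b]).comp θ.toAlgHom :
        MvPolynomial (Fin 2) ℂ →ₐ[ℂ] ℂ) = aeval ![b, α * b + β * a + γ] := by
      apply MvPolynomial.algHom_ext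
      intro i
      fin_cases i <;> simp [hθx, hθy]
    exact DFunLike.congr_fun h p
  have key : ∀ (m : ℕ) (pr : ℂ × ℂ) (p : MvPolynomial (Fin 2) ℂ),
      aeval ![pr.1, pr.2] ((θ ^ m) p) =
        aeval ![(f^[m] pr).1, (f^[m] pr).2] p := by
    intro m
    induction m with
    | zero => intro pr p; simp
    | succ m ih =>
      intro pr p
      rw [pow_succ', AlgEquiv.mul_apply, step1]
      have := ih (f pr) p
      simp only [hf] at this ⊢
      rw [this, ← Function.iterate_succ_apply]
  have iter : ∀ m : ℕ, f^[m] (0, l) =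
      ((f^[m] (0, 0)).1 + m * l ^ m, (f^[m] (0, 0)).2 + (m + 1) * l ^ (m + 1)) := by
    intro m
    induction m with
    | zero => simp
    | succ m ih =>
      rw [Function.iterate_succ_apply', ih, Function.iterate_succ_apply' f m (0, 0)]
      simp only [hf]
      simp only [Prod.mk.injEq]
      push_cast
      rw [hα, hβ2]
      constructor <;> ring
  have ev1 : ∀ pr : ℂ × ℂ, aeval ![pr.1, pr.2] (X 0 : MvPolynomial (Fin 2) ℂ) = pr.1 := by
    intro pr; simp
  have h1 : (f^[n] (0, l)).1 = 0 := by
    have := key n (0, l) (X 0)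
    rw [hpow] at this
    simpa using this.symm
  have h2 : (f^[n] (0, 0)).1 = 0 := by
    have := key n (0, 0) (X 0)
    rw [hpow] at this
    simpa using this.symm
  have : (n : ℂ) * l ^ n = 0 := by
    have := iter n
    have h3 : (f^[n] (0, l)).1 = (f^[n] (0, 0)).1 + n * l ^ n := by
      rw [this]
    rw [h1, h2, zero_add] at h3
    exact h3.symm
  have hne : (n : ℂ) * l ^ n ≠ 0 :=
    mul_ne_zero (Nat.cast_ne_zero.mpr hn.ne') (pow_ne_zero _ hl0)
  exact hne this
end

section
/- Let α, β, γ ∈ ℂ with β ≠ 0 and γ ≠ 0, and let θ be the ℂ-algebra automorphism of ℂ[x,y] determined by θ(x) = y and θ(y) = αy + βx + γ. If 1 is a root of the polynomial X² − αX − β (equivalently, α + β = 1), then θ has infinite order. -/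
open MvPolynomial

/-!
The linear form `q = βx + y` is translated by `θ`: since `α + β = 1`,
`θ q = βy + (αy + βx + γ) = q + γ`. Hence `θⁿ q = q + nγ`, which differs from `q` for every
`n ≥ 1` because `γ ≠ 0` and `ℂ` has characteristic zero.
-/

namespace AlgEquiv

variable {R A : Type*} [CommSemiring R]

theorem pow_apply_of_apply_eq_add_algebraMap [Semiring A] [Algebra R A] (f : A ≃ₐ[R] A)
    {q : A} {r : R} (h : f q = q + algebraMap R A r) (n : ℕ) :
    (f ^ n) q = q + n • algebraMap R A r := by
  induction n with
  | zero => simp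
  | succ n ih =>
    rw [pow_succ', mul_apply, ih, map_add, h, map_nsmul, commutes, succ_nsmul]
    abel

theorem not_isOfFinOrder_of_apply_eq_add_algebraMap [Ring A] [Algebra R A] [IsAddTorsionFree A]
    (f : A ≃ₐ[R] A) {q : A} {r : R} (h : f q = q + algebraMap R A r)
    (hr : algebraMap R A r ≠ 0) : ¬ IsOfFinOrder f := by
  rintro hfin
  obtain ⟨n, hn, hfn⟩ := isOfFinOrder_iff_pow_eq_one.mp hfin
  have hq := f.pow_apply_of_apply_eq_add_algebraMap h n
  rw [hfn, one_apply, left_eq_add] at hq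
  exact hr ((nsmul_eq_zero_iff_right hn.ne').mp hq)

end AlgEquiv

theorem theta_infinite_order_of_root_one_general (α β γ : ℂ) (hγ : γ ≠ 0)
    (θ : MvPolynomial (Fin 2) ℂ ≃ₐ[ℂ] MvPolynomial (Fin 2) ℂ)
    (hθx : θ (X 0) = X 1)
    (hθy : θ (X 1) = C α * X 1 + C β * X 0 + C γ)
    (hroot : α + β = 1) :
    ¬ IsOfFinOrder θ := by
  have hθC (r : ℂ) : θ (C r) = C r := θ.commutes r
  have htranslate : θ (C β * X 0 + X 1) = (C β * X 0 + X 1) + algebraMap ℂ _ γ := by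
    have hsum : (C α + C β : MvPolynomial (Fin 2) ℂ) = 1 := by rw [← C_add, hroot, C_1]
    rw [map_add, map_mul, hθC, hθx, hθy, algebraMap_eq]
    linear_combination (X 1 : MvPolynomial (Fin 2) ℂ) * hsum
  exact θ.not_isOfFinOrder_of_apply_eq_add_algebraMap htranslate (by simpa using hγ)

/-- Let `β ≠ 0`, `γ ≠ 0` and let `θ` be the `ℂ`-algebra automorphism of `ℂ[x,y]` with
`θ(x) = y` and `θ(y) = αy + βx + γ`.  If `1` is a root of `X² − αX − β`
(equivalently `α + β = 1`), then `θ` has infinite order. -/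
theorem theta_infinite_order_of_root_one (α β γ : ℂ) (hβ : β ≠ 0) (hγ : γ ≠ 0)
    (θ : MvPolynomial (Fin 2) ℂ ≃ₐ[ℂ] MvPolynomial (Fin 2) ℂ)
    (hθx : θ (X 0) = X 1)
    (hθy : θ (X 1) = C α * X 1 + C β * X 0 + C γ)
    (hroot : α + β = 1) :
    ¬ IsOfFinOrder θ :=
  theta_infinite_order_of_root_one_general α β γ hγ θ hθx hθy hroot
end
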